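/- Under the Setup: if there are indices 1 ≤ j < i ≤ t−1 with v_i, v_j ∈ e_1 ∩ U and (e_i ∩ e_j) ∖ U ≠ ∅, then N_H(v_{i−1}) ⊆ F ∖ {e_t} and N_H(v_j) ⊆ F ∖ {e_t}; and if there are indices 2 ≤ j < i ≤ t with v_{i−1}, v_{j−1} ∈ e_t ∩ U and (e_i ∩ e_j) ∖ U ≠ ∅, then N_H(v_{i−1}) ⊆ F ∖ {e_1} and N_H(v_j) ⊆ F ∖ {e_1}. -/

import Mathlib

namespace BergeM

def MIsBergePath {n : ℕ} (E : Multiset (Finset (Fin n))) (k : ℕ)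
    (v : Fin (k + 1) → Fin n) (f : Fin k → Finset (Fin n)) : Prop :=
  Function.Injective v ∧ (↑(List.ofFn f) : Multiset (Finset (Fin n))) ≤ E ∧
    ∀ i : Fin k, v i.castSucc ∈ f i ∧ v i.succ ∈ f i

def MHasBergePath {n : ℕ} (E : Multiset (Finset (Fin n))) (k : ℕ) : Prop :=
  ∃ v f, MIsBergePath E k v f

def MBPFree {n : ℕ} (E : Multiset (Finset (Fin n))) (k : ℕ) : Prop :=
  ¬ MHasBergePath E k

def MConnected {n : ℕ} (E : Multiset (Finset (Fin n))) : Prop :=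
  ∀ x y : Fin n, ∃ (k : ℕ) (v : Fin (k + 1) → Fin n) (f : Fin k → Finset (Fin n)),
    MIsBergePath E k v f ∧ (∃ i, v i = x) ∧ (∃ i, v i = y)

def MUniform {n : ℕ} (E : Multiset (Finset (Fin n))) (r : ℕ) : Prop :=
  ∀ e ∈ E, e.card = r

def MIsBergeCycle {n : ℕ} (E : Multiset (Finset (Fin n))) (k : ℕ)
    (v : Fin k → Fin n) (f : Fin k → Finset (Fin n)) : Prop :=
  Function.Injective v ∧ (↑(List.ofFn f) : Multiset (Finset (Fin n))) ≤ E ∧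
    ∀ i : Fin k, v i ∈ f i ∧ v ⟨(i.val + 1) % k, Nat.mod_lt _ i.pos⟩ ∈ f i

def MHasBergeCycle {n : ℕ} (E : Multiset (Finset (Fin n))) (k : ℕ) : Prop :=
  ∃ v f, MIsBergeCycle E k v f

def edgeNbhd {n : ℕ} (E : Multiset (Finset (Fin n))) (S : Finset (Fin n)) :
    Multiset (Finset (Fin n)) :=
  E.filter fun e => (e ∩ S).Nonempty

end BergeM

/-!
Both halves rest on one endpoint lemma: if a Berge path on `t` vertices uses exactly the edges
`e 1, …, e (t - 1)` and its first vertex lies in `e t`, then every edge at its last vertex `x` is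
one of these. Indeed, any further edge `a ∋ x` either equals `e t`, and closes a Berge cycle of
length `t`, or leaves, like `e t`, at least `r - t ≥ 1` vertices off the path, and the path extends
at both ends to a Berge path of length `t + 1` (here `t < k ≤ r`).

For the first half, a vertex `w ∈ (e i ∩ e j) \ U` re-routes the path into
`v (t-1), …, v i, w, v (j-1), …, v 1, v j, …, v (i-1)` (through `e i`, `e j`, …, `e 1`) and into
`v (t-1), …, v i, v 1, …, v (j-1), w, v (i-1), …, v j` (through `e 1`, …, `e j`, `e i`), both
starting at `v (t - 1) ∈ e t`. The second half is the first one for the path read backwards.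
-/

theorem List.map_range_add_one {α : Type*} (f : ℕ → α) (s : ℕ) :
    (List.range s).map (fun i => f (i + 1)) = (List.range' 1 s).map f := by
  rw [List.range'_eq_map_range, List.map_map]
  exact List.map_congr_left fun i _ => by simp [add_comm]

theorem List.range'_append_range' {a b c : ℕ} (hab : a ≤ b) (hbc : b ≤ c) :
    List.range' a (b - a) ++ List.range' b (c - b) = List.range' a (c - a) := by
  have := List.range'_append (s := a) (m := b - a) (n := c - b) (step := 1)
  rwa [one_mul, Nat.add_sub_cancel' hab, show b - a + (c - b) = c - a by omega] at this

theorem List.map_range_perm_of_eq_sub {α : Type*} {f g : ℕ → α} {s : ℕ}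
    (h : ∀ i < s, g i = f (s - 1 - i)) : ((List.range s).map g).Perm ((List.range s).map f) := by
  have hrev : (List.range s).map g = ((List.range s).map f).reverse := by
    rw [← List.map_reverse, List.range_eq_range', List.reverse_range', ← List.range_eq_range',
      List.map_map]
    exact List.map_congr_left fun i hi => by simpa using h i (List.mem_range.1 hi)
  rw [hrev]
  exact List.reverse_perm _

theorem Multiset.cons_le_of_count_lt {α : Type*} [DecidableEq α] {a : α} {s t : Multiset α}
    (hst : s ≤ t) (ha : s.count a < t.count a) : a ::ₘ s ≤ t := by
  rw [Multiset.le_iff_count]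
  intro b
  rw [Multiset.count_cons]
  split_ifs with hb
  · subst hb; omega
  · simpa using Multiset.le_iff_count.1 hst b

theorem Finset.exists_mem_sdiff_ne {α : Type*} [DecidableEq α] {P a b : Finset α} {r : ℕ}
    (ha : a.card = r) (hb : b.card = r) (hP : P.card < r) (hab : a ≠ b) :
    ∃ u ∈ a \ P, ∃ y ∈ b \ P, u ≠ y := by
  have hout : ∀ c : Finset α, c.card = r → (c \ P).Nonempty := fun c hc =>
    Finset.sdiff_nonempty.2 fun h => by have := Finset.card_le_card h; omega
  by_contra! hcon
  obtain ⟨u, hu⟩ := hout a ha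
  obtain ⟨y, hy⟩ := hout b hb
  -- `a \ P` and `b \ P` are then the same singleton `{u}`, which forces `a = insert u P = b`
  have hfill : ∀ c : Finset α, c.card = r → (∀ x ∈ c \ P, x = u) → c = insert u P :=
    fun c hc hcu => Finset.eq_of_subset_of_card_le
      (fun x hx => Finset.mem_insert.2 <| by
        by_cases hxP : x ∈ P
        exacts [Or.inr hxP, Or.inl (hcu x (Finset.mem_sdiff.2 ⟨hx, hxP⟩))])
      (by have := Finset.card_insert_le u P; omega)
  have hyu : y = u := (hcon u hu y hy).symm
  exact hab ((hfill a ha fun x hx => (hcon x hx y hy).trans hyu).trans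
    (hfill b hb fun x hx => (hcon u hu x hx).symm).symm)

namespace BergeM

/-- `BergeChain L M`: consecutive vertices of `L` lie in the corresponding edges of `M`, i.e. a
Berge walk without the distinctness conditions of a Berge path. -/
inductive BergeChain {α : Type*} : List α → List (Finset α) → Prop
  | singleton (x : α) : BergeChain [x] []
  | cons {x y : α} {g : Finset α} {L : List α} {M : List (Finset α)} :
      x ∈ g → y ∈ g → BergeChain (y :: L) M → BergeChain (x :: y :: L) (g :: M)

namespace BergeChain

variable {α : Type*} {L L₁ L₂ : List α} {M M₁ M₂ : List (Finset α)}

theorem length_eq (h : BergeChain L M) : L.length = M.length + 1 := by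
  induction h with
  | singleton => rfl
  | cons _ _ _ ih => simpa using ih

theorem append {g : Finset α} (h₁ : BergeChain L₁ M₁) (h₂ : BergeChain L₂ M₂)
    (hx : ∀ x ∈ L₁.getLast?, x ∈ g) (hy : ∀ y ∈ L₂.head?, y ∈ g) :
    BergeChain (L₁ ++ L₂) (M₁ ++ g :: M₂) := by
  induction h₁ with
  | singleton x =>
    cases h₂ with
    | singleton y => exact cons (hx x rfl) (hy y rfl) (singleton y)
    | cons hy' hz h => exact cons (hx x rfl) (hy _ rfl) (cons hy' hz h)
  | cons hx' hy' _ ih => exact cons hx' hy' (ih (by simpa using hx))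

theorem reverse (h : BergeChain L M) : BergeChain L.reverse M.reverse := by
  induction h with
  | singleton x => exact singleton x
  | @cons x y g L M hx hy _ ih =>
    simpa using ih.append (singleton x) (g := g) (by simpa using hy) (by simpa using hx)

theorem getElem_mem (h : BergeChain L M) {i : ℕ} (hi : i < M.length) :
    L[i]'(by have := h.length_eq; omega) ∈ M[i] ∧
      L[i + 1]'(by have := h.length_eq; omega) ∈ M[i] := by
  induction h generalizing i with
  | singleton => simp at hi
  | cons hx hy _ ih =>
    cases i with
    | zero => exact ⟨hx, hy⟩
    | succ i => exact ih (by simpa using hi)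

variable {n : ℕ} {E : Multiset (Finset (Fin n))} {L : List (Fin n)} {M : List (Finset (Fin n))}

theorem hasBergePath (h : BergeChain L M) (hnd : L.Nodup) (hE : (M : Multiset _) ≤ E) :
    MHasBergePath E M.length := by
  have hlen := h.length_eq
  refine ⟨fun i => L[i.val]'(by omega), fun i => M[i.val], fun a b hab => ?_, ?_,
    fun i => h.getElem_mem i.isLt⟩
  · exact Fin.ext ((hnd.getElem_inj_iff).1 hab)
  · rwa [List.ofFn_getElem]

theorem hasBergeCycle {z : Fin n} (h : BergeChain (L ++ [z]) M) (hz : L.head? = some z)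
    (hnd : L.Nodup) (hE : (M : Multiset _) ≤ E) : MHasBergeCycle E M.length := by
  have hlen : L.length = M.length := by simpa using h.length_eq
  have hpos : 0 < L.length := List.length_pos_iff.2 (by rintro rfl; simp at hz)
  have hwrap : ∀ k (hk : k ≤ L.length),
      (L ++ [z])[k]'(by simp; omega) = L[k % L.length]'(Nat.mod_lt _ hpos) := by
    intro k hk
    rcases hk.lt_or_eq with hk | rfl
    · simp [List.getElem_append_left hk, Nat.mod_eq_of_lt hk]
    · simp [List.head?_eq_getElem?, List.getElem?_eq_getElem hpos] at hz
      simp [hz]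
  refine ⟨fun i => L[i.val]'(by omega), fun i => M[i.val], fun a b hab => ?_, ?_, fun i => ?_⟩
  · exact Fin.ext ((hnd.getElem_inj_iff).1 hab)
  · rwa [List.ofFn_getElem]
  · have := h.getElem_mem i.isLt
    rw [hwrap i (by omega), hwrap (i + 1) (by omega)] at this
    simpa [hlen, Nat.mod_eq_of_lt i.isLt] using this

theorem hasBergeCycle_of_mem {g : Finset (Fin n)} (h : BergeChain L M) (hnd : L.Nodup)
    (hhead : ∀ z ∈ L.head?, z ∈ g) (hlast : ∀ x ∈ L.getLast?, x ∈ g)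
    (hE : g ::ₘ (M : Multiset _) ≤ E) : MHasBergeCycle E (M.length + 1) := by
  obtain ⟨z, hz⟩ : ∃ z, L.head? = some z :=
    Option.isSome_iff_exists.1 (by simpa using List.length_pos_iff.1 (by simp [h.length_eq]))
  simpa using (h.append (singleton z) hlast (by simpa using hhead z hz)).hasBergeCycle hz hnd
    (by rwa [Multiset.coe_eq_coe.2 (List.perm_append_singleton g M), ← Multiset.cons_coe])

theorem hasBergePath_of_extend {g a : Finset (Fin n)} {u y : Fin n} (h : BergeChain L M)
    (hnd : L.Nodup) (huL : u ∉ L) (hyL : y ∉ L) (huy : u ≠ y) (hug : u ∈ g)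
    (hhead : ∀ z ∈ L.head?, z ∈ g) (hlast : ∀ x ∈ L.getLast?, x ∈ a) (hya : y ∈ a)
    (hE : a ::ₘ g ::ₘ (M : Multiset _) ≤ E) : MHasBergePath E (M.length + 2) := by
  have hchain : BergeChain (u :: L ++ [y]) (g :: M ++ [a]) :=
    ((singleton u).append h (by simpa using hug) hhead).append (singleton y)
      (by cases L with
        | nil => cases h
        | cons z L => simpa using hlast) (by simpa using hya)
  have hnd' : (u :: L ++ [y]).Nodup := by
    rw [List.cons_append, List.nodup_cons, List.nodup_append]
    simp only [List.mem_append, List.mem_singleton, List.nodup_singleton, true_and]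
    exact ⟨by tauto, hnd, fun b hb _ hy' hby => hyL (hy' ▸ hby ▸ hb)⟩
  simpa using hchain.hasBergePath hnd' (by
    rwa [Multiset.coe_eq_coe.2 (List.perm_append_singleton a _), ← Multiset.cons_coe,
      ← Multiset.cons_coe])

end BergeChain

theorem MHasBergePath.mono {n : ℕ} {E : Multiset (Finset (Fin n))} {s t : ℕ}
    (h : MHasBergePath E t) (hst : s ≤ t) : MHasBergePath E s := by
  obtain ⟨v, f, hinj, hle, hmem⟩ := h
  refine ⟨Fin.take (s + 1) (by omega) v, Fin.take s hst f,
    hinj.comp (Fin.castLE_injective _), ?_, fun i => ?_⟩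
  · rw [Fin.ofFn_take_eq_take_ofFn]
    exact le_trans (Multiset.coe_le.2 (List.take_sublist _ _).subperm) hle
  · simpa [Fin.take] using hmem (Fin.castLE hst i)

theorem MBPFree.lt_of_hasBergePath {n : ℕ} {E : Multiset (Finset (Fin n))} {k t : ℕ}
    (hf : MBPFree E k) (ht : MHasBergePath E t) : t < k :=
  lt_of_not_ge fun h => hf (ht.mono h)

theorem edgeNbhd_le_of_bergeChain {n r t : ℕ} {E : Multiset (Finset (Fin n))}
    (hu : MUniform E r) (htr : t < r) (hmax : ∀ s, MHasBergePath E s → s ≤ t)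
    (hcyc : ¬ MHasBergeCycle E t) {F : Multiset (Finset (Fin n))} {g : Finset (Fin n)}
    (hgF : g ::ₘ F ≤ E) {L : List (Fin n)} {M : List (Finset (Fin n))} {x : Fin n}
    (hL : BergeChain L M) (hnd : L.Nodup) (hlen : M.length + 1 = t) (hMF : (M : Multiset _) = F)
    (hg : ∀ z ∈ L.head?, z ∈ g) (hx : L.getLast? = some x) :
    edgeNbhd E {x} ≤ F := by
  rw [Multiset.le_iff_count]
  by_contra! ⟨a, ha⟩
  rw [edgeNbhd, Multiset.count_filter] at ha
  split_ifs at ha with hxa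
  swap
  · omega
  obtain ⟨_, hx'⟩ := hxa
  rw [Finset.mem_inter, Finset.mem_singleton] at hx'
  have hlast : ∀ y ∈ L.getLast?, y ∈ a := by simp [hx, ← hx'.2, hx'.1]
  have haE : a ∈ E := Multiset.count_pos.1 (by omega)
  subst hMF
  obtain rfl | hag := eq_or_ne a g
  · exact hcyc (hlen ▸ hL.hasBergeCycle_of_mem hnd hg hlast hgF)
  · have hcard : L.toFinset.card < r := by
      rwa [List.toFinset_card_of_nodup hnd, hL.length_eq, hlen]
    obtain ⟨u, hu', y, hy', huy⟩ := Finset.exists_mem_sdiff_ne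
      (hu g (Multiset.mem_of_le hgF (Multiset.mem_cons_self g _))) (hu a haE) hcard hag.symm
    rw [Finset.mem_sdiff, List.mem_toFinset] at hu' hy'
    have := hmax _ (hL.hasBergePath_of_extend hnd hu'.2 hy'.2 huy hu'.1 hg hlast hy'.1
      (Multiset.cons_le_of_count_lt hgF (by rwa [Multiset.count_cons_of_ne hag])))
    omega

/-- `e 1, …, e t` and `v 1, …, v (t - 1)` are the defining edges and internal defining vertices
of a Berge path of length `t` in `E`. -/
structure DefinesBergePath {n : ℕ} (E : Multiset (Finset (Fin n))) (t : ℕ)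
    (e : ℕ → Finset (Fin n)) (v : ℕ → Fin n) : Prop where
  edges_le : (↑((List.range t).map fun i => e (i + 1)) : Multiset (Finset (Fin n))) ≤ E
  injOn : Set.InjOn v (Set.Icc 1 (t - 1))
  first_mem : v 1 ∈ e 1
  last_mem : v (t - 1) ∈ e t
  mem_of_mid : ∀ i, 2 ≤ i → i ≤ t - 1 → v (i - 1) ∈ e i ∧ v i ∈ e i

namespace DefinesBergePath

variable {n : ℕ} {E : Multiset (Finset (Fin n))} {t : ℕ} {e : ℕ → Finset (Fin n)}
  {v : ℕ → Fin n}

theorem reflect (hP : DefinesBergePath E t e v) (ht : 1 ≤ t) :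
    DefinesBergePath E t (fun m => e (t + 1 - m)) (fun m => v (t - m)) where
  edges_le := le_trans (Multiset.coe_le.2 (List.map_range_perm_of_eq_sub
    (f := fun i => e (i + 1)) fun i hi => by congr 1; omega).subperm) hP.edges_le
  injOn := hP.injOn.comp (fun a ha b hb hab => by simp at ha hb; omega)
    (fun a ha => by simp at ha ⊢; omega)
  first_mem := by simpa using hP.last_mem
  last_mem := by simpa [show t - (t - 1) = 1 by omega, show t + 1 - t = 1 by omega] using
    hP.first_mem
  mem_of_mid m hm hmt := by
    have h := hP.mem_of_mid (t + 1 - m) (by omega) (by omega)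
    rw [show t + 1 - m - 1 = t - m by omega] at h
    rw [show t - (m - 1) = t + 1 - m by omega]
    exact h.symm

theorem bergeChain_run (hP : DefinesBergePath E t e v) {a b : ℕ} (ha : 1 ≤ a) (hab : a < b)
    (hb : b ≤ t) :
    BergeChain ((List.range' a (b - a)).map v) ((List.range' (a + 1) (b - a - 1)).map e) := by
  obtain ⟨l, rfl⟩ : ∃ l, b = a + l + 1 := ⟨b - a - 1, by omega⟩
  rw [show a + l + 1 - a = l + 1 by omega, Nat.add_sub_cancel]
  clear hab
  induction l generalizing a with
  | zero => exact BergeChain.singleton (v a)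
  | succ l ih =>
    have hmem := hP.mem_of_mid (a + 1) (by omega) (by omega)
    have hrest := ih (a := a + 1) (by omega) (by omega)
    simp only [List.range'_succ, List.map_cons, Nat.add_sub_cancel] at hrest hmem ⊢
    exact BergeChain.cons hmem.1 hmem.2 hrest

/-- For `j = 1` the detour is just `w`, whose membership in `e 1` comes from `e 1 = e j`. -/
theorem bergeChain_detour (hP : DefinesBergePath E t e v) {j : ℕ} {w : Fin n} (hj : 1 ≤ j)
    (hjt : j ≤ t - 1) (hw : w ∈ e j) :
    BergeChain ((List.range' 1 (j - 1)).map v ++ [w]) ((List.range' 2 (j - 1)).map e) ∧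
      ∀ y ∈ ((List.range' 1 (j - 1)).map v ++ [w]).head?, y ∈ e 1 := by
  obtain rfl | ⟨k, rfl⟩ : j = 1 ∨ ∃ k, j = k + 2 := by
    rcases j with _ | _ | k <;> simp_all
  · simpa using ⟨BergeChain.singleton w, hw⟩
  · have hrun := hP.bergeChain_run (a := 1) (b := k + 2) le_rfl (by omega) (by omega)
    have hlink := (hP.mem_of_mid (k + 2) (by omega) hjt).1
    refine ⟨?_, by simpa [List.head?_range'] using hP.first_mem⟩
    simpa [List.range'_concat, add_comm] using
      hrun.append (BergeChain.singleton w) (g := e (k + 2)) (by simpa [List.getLast?_range',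
        add_comm] using hlink) (by simpa using hw)

theorem edgeNbhd_le_of_perm (hP : DefinesBergePath E t e v) {r : ℕ} (hu : MUniform E r)
    (htr : t < r) (hmax : ∀ s, MHasBergePath E s → s ≤ t) (hcyc : ¬ MHasBergeCycle E t)
    (ht : 1 ≤ t) {w : Fin n} (hwU : w ∉ (Finset.Icc 1 (t - 1)).image v) {L : List (Fin n)}
    {M : List (Finset (Fin n))} {x : Fin n} (hL : BergeChain L M)
    (hLp : L.Perm (w :: (List.range' 1 (t - 1)).map v))
    (hMp : M.Perm ((List.range' 1 (t - 1)).map e)) (hhead : L.head? = some (v (t - 1)))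
    (hlast : L.getLast? = some x) :
    edgeNbhd E {x} ≤ ↑((List.range (t - 1)).map fun i => e (i + 1)) := by
  have hgF : e t ::ₘ ↑((List.range (t - 1)).map fun i => e (i + 1)) ≤ E := by
    have h := hP.edges_le
    rw [← Nat.sub_add_cancel ht, List.range_succ, List.map_append, List.map_singleton,
      Nat.sub_add_cancel ht, Multiset.coe_eq_coe.2 (List.perm_append_singleton _ _)] at h
    exact h
  have hnd : (w :: (List.range' 1 (t - 1)).map v).Nodup := by
    refine List.nodup_cons.2 ⟨fun hw => hwU ?_, List.Nodup.map_on (fun a ha b hb hab =>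
      hP.injOn (by simp at ha; simp; omega) (by simp at hb; simp; omega) hab) List.nodup_range'⟩
    obtain ⟨m, hm, rfl⟩ := List.mem_map.1 hw
    exact Finset.mem_image.2 ⟨m, by simp at hm; simp; omega, rfl⟩
  exact edgeNbhd_le_of_bergeChain hu htr hmax hcyc hgF hL (hLp.nodup_iff.2 hnd)
    (by simp [hMp.length_eq]; omega)
    (by rw [List.map_range_add_one]; exact Multiset.coe_eq_coe.2 hMp)
    (by simpa [hhead] using hP.last_mem) hlast

section Reroute

variable (hP : DefinesBergePath E t e v) {r : ℕ} (hu : MUniform E r) (htr : t < r)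
  (hmax : ∀ s, MHasBergePath E s → s ≤ t) (hcyc : ¬ MHasBergeCycle E t) {i j : ℕ}
  (hj : 1 ≤ j) (hji : j < i) (hit : i ≤ t - 1) {w : Fin n} (hwi : w ∈ e i) (hwj : w ∈ e j)
  (hwU : w ∉ (Finset.Icc 1 (t - 1)).image v)
include hP hu htr hmax hcyc hj hji hit hwi hwj hwU

/-- Re-route along `v (t-1), …, v i, w, v (j-1), …, v 1, v j, …, v (i-1)`. -/
theorem edgeNbhd_pred_le_of_mem_first_edge (hvj : v j ∈ e 1) :
    edgeNbhd E {v (i - 1)} ≤ ↑((List.range (t - 1)).map fun i => e (i + 1)) := by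
  have hA := (hP.bergeChain_run (a := i) (b := t) (by omega) (by omega) le_rfl).reverse
  have hC := hP.bergeChain_run (a := j) (b := i) hj hji (by omega)
  obtain ⟨hD, hD1⟩ := hP.bergeChain_detour hj (by omega) hwj
  refine hP.edgeNbhd_le_of_perm hu htr hmax hcyc (by omega) hwU
    (hA.append (hD.reverse.append hC (g := e 1)
      (fun y hy => hD1 y (by rwa [List.getLast?_reverse] at hy))
      (by simpa [List.head?_range', show i - j ≠ 0 by omega] using hvj))
      (by simpa [List.head?_range', show t - i ≠ 0 by omega] using
        (hP.mem_of_mid i (by omega) hit).2)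
      (by simpa using hwi)) ?_ ?_ ?_ ?_
  · rw [← List.range'_append_range' (a := 1) (b := i) (c := t) (by omega) (by omega),
      ← List.range'_append_range' (c := i) hj hji.le, List.perm_iff_count]
    intro a
    simp only [List.map_append, List.count_append, List.count_cons, List.count_reverse,
      List.count_nil]
    omega
  · have hJ : ((List.range' (i + 1) (t - i - 1)).reverse ++ i ::
        ((List.range' 2 (j - 1)).reverse ++ 1 :: List.range' (j + 1) (i - j - 1))).Perm
        (List.range' 1 (t - 1)) := by
      rw [List.perm_iff_count]
      intro m
      simp only [List.count_append, List.count_cons, List.count_reverse, List.count_range_1',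
        beq_iff_eq]
      split_ifs <;> omega
    simpa using hJ.map e
  · simp [List.head?_append, List.getLast?_range', show t - i ≠ 0 by omega,
      show i + (t - i) - 1 = t - 1 by omega]
  · simp only [List.getLast?_append, List.getLast?_map, List.getLast?_range',
      if_neg (show i - j ≠ 0 by omega), show j + (i - j) - 1 = i - 1 by omega, Option.map_some,
      Option.some_or]

/-- Re-route along `v (t-1), …, v i, v 1, …, v (j-1), w, v (i-1), …, v j`. -/
theorem edgeNbhd_le_of_mem_first_edge (hvi : v i ∈ e 1) :
    edgeNbhd E {v j} ≤ ↑((List.range (t - 1)).map fun i => e (i + 1)) := by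
  have hA := (hP.bergeChain_run (a := i) (b := t) (by omega) (by omega) le_rfl).reverse
  have hC := (hP.bergeChain_run (a := j) (b := i) hj hji (by omega)).reverse
  obtain ⟨hD, hD1⟩ := hP.bergeChain_detour hj (by omega) hwj
  refine hP.edgeNbhd_le_of_perm hu htr hmax hcyc (by omega) hwU
    (hA.append (hD.append hC (g := e i) (by simpa using hwi)
      (by simpa [List.getLast?_range', show i - j ≠ 0 by omega,
        show j + (i - j) - 1 = i - 1 by omega] using (hP.mem_of_mid i (by omega) hit).1))
      (by simpa [List.head?_range', show t - i ≠ 0 by omega] using hvi)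
      (by simpa using hD1)) ?_ ?_ ?_ ?_
  · rw [← List.range'_append_range' (a := 1) (b := i) (c := t) (by omega) (by omega),
      ← List.range'_append_range' (c := i) hj hji.le, List.perm_iff_count]
    intro a
    simp only [List.map_append, List.count_append, List.count_cons, List.count_reverse,
      List.count_nil]
    omega
  · have hJ : ((List.range' (i + 1) (t - i - 1)).reverse ++ 1 ::
        (List.range' 2 (j - 1) ++ i :: (List.range' (j + 1) (i - j - 1)).reverse)).Perm
        (List.range' 1 (t - 1)) := by
      rw [List.perm_iff_count]
      intro m
      simp only [List.count_append, List.count_cons, List.count_reverse, List.count_range_1',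
        beq_iff_eq]
      split_ifs <;> omega
    simpa using hJ.map e
  · simp [List.head?_append, List.getLast?_range', show t - i ≠ 0 by omega,
      show i + (t - i) - 1 = t - 1 by omega]
  · simp only [List.getLast?_append, List.getLast?_reverse, List.head?_map, List.head?_range',
      if_neg (show i - j ≠ 0 by omega), Option.map_some, Option.some_or]

end Reroute

theorem edgeNbhd_le_of_mem_last_edge (hP : DefinesBergePath E t e v) {r : ℕ}
    (hu : MUniform E r) (htr : t < r) (hmax : ∀ s, MHasBergePath E s → s ≤ t)
    (hcyc : ¬ MHasBergeCycle E t) {i j : ℕ} (hj : 2 ≤ j) (hji : j < i) (hit : i ≤ t)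
    (hvi : v (i - 1) ∈ e t) (hvj : v (j - 1) ∈ e t) {w : Fin n} (hwi : w ∈ e i)
    (hwj : w ∈ e j) (hwU : w ∉ (Finset.Icc 1 (t - 1)).image v) :
    edgeNbhd E {v (i - 1)} ≤ ↑((List.range (t - 1)).map fun i => e (i + 2)) ∧
      edgeNbhd E {v j} ≤ ↑((List.range (t - 1)).map fun i => e (i + 2)) := by
  have hF : (↑((List.range (t - 1)).map fun i => e (t - i)) :
      Multiset (Finset (Fin n))) = ↑((List.range (t - 1)).map fun i => e (i + 2)) :=
    Multiset.coe_eq_coe.2 (List.map_range_perm_of_eq_sub fun i hi => by congr 1; omega)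
  have hQ := hP.reflect (by omega)
  have hwU' : w ∉ (Finset.Icc 1 (t - 1)).image fun m => v (t - m) := fun hw => hwU <| by
    obtain ⟨m, hm, hmw⟩ := Finset.mem_image.1 hw
    exact Finset.mem_image.2 ⟨t - m, by simp at hm ⊢; omega, hmw⟩
  have hwi' : w ∈ e (t + 1 - (t + 1 - i)) := by rwa [show t + 1 - (t + 1 - i) = i by omega]
  have hwj' : w ∈ e (t + 1 - (t + 1 - j)) := by rwa [show t + 1 - (t + 1 - j) = j by omega]
  constructor
  · simpa [hF, show t - (t + 1 - i) = i - 1 by omega] using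
      hQ.edgeNbhd_le_of_mem_first_edge hu htr hmax hcyc (i := t + 1 - j) (j := t + 1 - i)
        (by omega) (by omega) (by omega) hwj' hwi' hwU'
        (by simpa [show t - (t + 1 - j) = j - 1 by omega] using hvj)
  · simpa [hF, show t - (t + 1 - j - 1) = j by omega] using
      hQ.edgeNbhd_pred_le_of_mem_first_edge hu htr hmax hcyc (i := t + 1 - j) (j := t + 1 - i)
        (by omega) (by omega) (by omega) hwj' hwi' hwU'
        (by simpa [show t - (t + 1 - i) = i - 1 by omega] using hvi)

end DefinesBergePath

theorem stmt15_general    (n r k t : ℕ) (hrk : k ≤ r)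
    (E : Multiset (Finset (Fin n))) (hu : MUniform E r)
    (hf : MBPFree E k)
    (ht : MHasBergePath E t) (hmax : ∀ s : ℕ, MHasBergePath E s → s ≤ t)
    (hcyc : ¬ MHasBergeCycle E t)
    (e : ℕ → Finset (Fin n)) (v : ℕ → Fin n)
    (he : (↑((List.range t).map fun i => e (i + 1)) : Multiset (Finset (Fin n))) ≤ E)
    (hvinj : Set.InjOn v (Set.Icc 1 (t - 1)))
    (hv1 : v 1 ∈ e 1) (hvt : v (t - 1) ∈ e t)
    (hvmid : ∀ i : ℕ, 2 ≤ i → i ≤ t - 1 → v (i - 1) ∈ e i ∧ v i ∈ e i)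
 :
    (∀ i j : ℕ, 1 ≤ j → j < i → i ≤ t - 1 → v i ∈ e 1 → v j ∈ e 1 →
        ((e i ∩ e j) \ (Finset.Icc 1 (t - 1)).image v).Nonempty →
        edgeNbhd E {v (i - 1)} ≤
          (↑((List.range (t - 1)).map fun i => e (i + 1)) : Multiset (Finset (Fin n))) ∧
        edgeNbhd E {v j} ≤
          (↑((List.range (t - 1)).map fun i => e (i + 1)) : Multiset (Finset (Fin n)))) ∧
    (∀ i j : ℕ, 2 ≤ j → j < i → i ≤ t → v (i - 1) ∈ e t → v (j - 1) ∈ e t →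
        ((e i ∩ e j) \ (Finset.Icc 1 (t - 1)).image v).Nonempty →
        edgeNbhd E {v (i - 1)} ≤
          (↑((List.range (t - 1)).map fun i => e (i + 2)) : Multiset (Finset (Fin n))) ∧
        edgeNbhd E {v j} ≤
          (↑((List.range (t - 1)).map fun i => e (i + 2)) : Multiset (Finset (Fin n)))) := by
  have hP : DefinesBergePath E t e v := ⟨he, hvinj, hv1, hvt, hvmid⟩
  have htr : t < r := (hf.lt_of_hasBergePath ht).trans_le hrk
  refine ⟨fun i j hj hji hit hvi hvj ⟨w, hw⟩ => ?_, fun i j hj hji hit hvi hvj ⟨w, hw⟩ => ?_⟩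
  all_goals rw [Finset.mem_sdiff, Finset.mem_inter] at hw
  · exact ⟨hP.edgeNbhd_pred_le_of_mem_first_edge hu htr hmax hcyc hj hji hit hw.1.1 hw.1.2 hw.2 hvj,
      hP.edgeNbhd_le_of_mem_first_edge hu htr hmax hcyc hj hji hit hw.1.1 hw.1.2 hw.2 hvi⟩
  · exact hP.edgeNbhd_le_of_mem_last_edge hu htr hmax hcyc hj hji hit hvi hvj hw.1.1 hw.1.2 hw.2

theorem stmt15    (n r k t : ℕ) (hk : 3 ≤ k) (hrk : k ≤ r) (hn : r < n)
    (E : Multiset (Finset (Fin n))) (hu : MUniform E r) (hc : MConnected E)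
    (hf : MBPFree E k)
    (ht : MHasBergePath E t) (hmax : ∀ s : ℕ, MHasBergePath E s → s ≤ t)
    (hcyc : ¬ MHasBergeCycle E t)
    (e : ℕ → Finset (Fin n)) (v : ℕ → Fin n)
    (he : (↑((List.range t).map fun i => e (i + 1)) : Multiset (Finset (Fin n))) ≤ E)
    (hvinj : Set.InjOn v (Set.Icc 1 (t - 1)))
    (hv1 : v 1 ∈ e 1) (hvt : v (t - 1) ∈ e t)
    (hvmid : ∀ i : ℕ, 2 ≤ i → i ≤ t - 1 → v (i - 1) ∈ e i ∧ v i ∈ e i)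
 :
    (∀ i j : ℕ, 1 ≤ j → j < i → i ≤ t - 1 → v i ∈ e 1 → v j ∈ e 1 →
        ((e i ∩ e j) \ (Finset.Icc 1 (t - 1)).image v).Nonempty →
        edgeNbhd E {v (i - 1)} ≤
          (↑((List.range (t - 1)).map fun i => e (i + 1)) : Multiset (Finset (Fin n))) ∧
        edgeNbhd E {v j} ≤
          (↑((List.range (t - 1)).map fun i => e (i + 1)) : Multiset (Finset (Fin n)))) ∧
    (∀ i j : ℕ, 2 ≤ j → j < i → i ≤ t → v (i - 1) ∈ e t → v (j - 1) ∈ e t →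
        ((e i ∩ e j) \ (Finset.Icc 1 (t - 1)).image v).Nonempty →
        edgeNbhd E {v (i - 1)} ≤
          (↑((List.range (t - 1)).map fun i => e (i + 2)) : Multiset (Finset (Fin n))) ∧
        edgeNbhd E {v j} ≤
          (↑((List.range (t - 1)).map fun i => e (i + 2)) : Multiset (Finset (Fin n)))) :=
  stmt15_general n r k t hrk E hu hf ht hmax hcyc e v he hvinj hv1 hvt hvmid

end BergeM
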